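/- Let G be a connected graph on p vertices in which every vertex has eccentricity greater than 1. Then 2·W_ε(G) ≤ (p-1)·ε*(G) − ζ(G), where ε*(G) is the total eccentricity and ζ(G) = Σ_v deg(v)·e(v) is the eccentric connectivity index. Equality holds if and only if G has diameter 2. -/

import Mathlib

open Finset

namespace EccPaper

variable {V : Type*}

noncomputable def ecc [Fintype V] (G : SimpleGraph V) (v : V) : ℕ :=
  Finset.univ.sup (fun u => G.dist v u)

noncomputable def graphDiam [Fintype V] (G : SimpleGraph V) : ℕ :=
  Finset.univ.sup (fun v => ecc G v)

noncomputable def eccMatR [Fintype V] (G : SimpleGraph V) : Matrix V V ℝ :=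
  fun u v => if G.dist u v = min (ecc G u) (ecc G v) then (G.dist u v : ℝ) else 0

noncomputable def eccWiener [Fintype V] (G : SimpleGraph V) : ℝ :=
  (∑ u, ∑ v, eccMatR G u v) / 2

noncomputable def totalEcc [Fintype V] (G : SimpleGraph V) : ℝ :=
  ∑ v, (ecc G v : ℝ)

noncomputable def eccConnIndex [Fintype V] (G : SimpleGraph V) [DecidableRel G.Adj] : ℝ :=
  ∑ v, (G.degree v : ℝ) * (ecc G v : ℝ)

lemma eccMatR_isHermitian [Fintype V] (G : SimpleGraph V) : (eccMatR G).IsHermitian := by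
  ext i j
  simp only [eccMatR, Matrix.conjTranspose_apply, starRingEnd_apply, star_trivial]
  rw [SimpleGraph.dist_comm, min_comm]

noncomputable def eccEnergy [Fintype V] [DecidableEq V] (G : SimpleGraph V) : ℝ :=
  ∑ i, |(eccMatR_isHermitian G).eigenvalues i|

noncomputable def eccSpecRadius [Fintype V] [DecidableEq V] (G : SimpleGraph V) : ℝ :=
  ⨆ i, |(eccMatR_isHermitian G).eigenvalues i|

def eccGraph [Fintype V] (G : SimpleGraph V) : SimpleGraph V where
  Adj u v := u ≠ v ∧ G.dist u v = min (ecc G u) (ecc G v)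
  symm := by
    constructor
    rintro u v ⟨h1, h2⟩
    exact ⟨h1.symm, by rwa [SimpleGraph.dist_comm, min_comm]⟩
  loopless := ⟨fun v h => h.1 rfl⟩

def IsIrreducible [Fintype V] (M : Matrix V V ℝ) : Prop :=
  ¬ ∃ S : Set V, S.Nonempty ∧ S ≠ Set.univ ∧ ∀ i ∈ S, ∀ j ∉ S, M i j = 0

def centralGraph [DecidableEq V] (G : SimpleGraph V) [DecidableRel G.Adj] :
    SimpleGraph (V ⊕ G.edgeSet) where
  Adj x y :=
    match x, y with
    | Sum.inl u, Sum.inl v => u ≠ v ∧ ¬ G.Adj u v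
    | Sum.inl u, Sum.inr e => u ∈ (e : Sym2 V)
    | Sum.inr e, Sum.inl u => u ∈ (e : Sym2 V)
    | Sum.inr _, Sum.inr _ => False
  symm := by
    constructor
    rintro (u | e) (v | f) h
    · exact ⟨h.1.symm, fun hadj => h.2 hadj.symm⟩
    · exact h
    · exact h
    · exact h
  loopless := by
    constructor
    rintro (u | e) h
    · exact h.1 rfl
    · exact h

/-!
Every row `u` of the eccentricity matrix vanishes on `u` itself and on the neighbours of `u`,
since there the distance is at most `1 < min (e u) (e v)`; every other entry is at most `e u`.
Summing over the `p - 1 - deg u` non-neighbours gives `2 W_ε ≤ Σ_u (p - 1 - deg u) e(u)`.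
Equality forces `d(u, v) = e(u)` for all non-adjacent `v ≠ u`. If `e(u) ≥ 3`, a vertex at
distance `2` from `u` on a geodesic towards an eccentric vertex violates this, so every
eccentricity is `2`; conversely in diameter `2` every non-adjacent pair is at distance `2`.
-/

end EccPaper

namespace SimpleGraph

variable {V : Type*} {G : SimpleGraph V}

theorem Reachable.exists_dist_eq_of_le_dist {u w : V} (hr : G.Reachable u w) {k : ℕ}
    (hk : k ≤ G.dist u w) : ∃ x, G.dist u x = k := by
  obtain ⟨p, hp⟩ := hr.exists_walk_length_eq_dist
  refine ⟨p.getVert k, ?_⟩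
  rw [← length_eq_dist_of_subwalk hp (p.isSubwalk_take k), Walk.take_length]
  omega

end SimpleGraph

namespace EccPaper

variable {V : Type*} [Fintype V] {G : SimpleGraph V}

theorem dist_le_ecc (G : SimpleGraph V) (u v : V) : G.dist u v ≤ ecc G u :=
  le_sup (mem_univ v)

theorem ecc_le_graphDiam (u : V) : ecc G u ≤ graphDiam G :=
  le_sup (mem_univ u)

theorem exists_dist_eq_of_le_ecc (hconn : G.Connected) (u : V) {k : ℕ} (hk : k ≤ ecc G u) :
    ∃ x, G.dist u x = k := by
  have : Nonempty V := hconn.nonempty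
  obtain ⟨w, -, hw⟩ := exists_mem_eq_sup univ univ_nonempty (G.dist u)
  exact (hconn u w).exists_dist_eq_of_le_dist (hw ▸ hk)

theorem eccMatR_le_ecc (u v : V) : eccMatR G u v ≤ ecc G u := by
  unfold eccMatR
  split_ifs
  · exact_mod_cast dist_le_ecc G u v
  · positivity

theorem eccMatR_eq_zero_of_dist_le_one {u v : V} (hu : 1 < ecc G u) (hv : 1 < ecc G v)
    (h : G.dist u v ≤ 1) : eccMatR G u v = 0 := by
  have : G.dist u v ≠ min (ecc G u) (ecc G v) := by omega
  simp [eccMatR, this]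

theorem two_mul_eccWiener : 2 * eccWiener G = ∑ u, ∑ v, eccMatR G u v := by
  rw [eccWiener]
  ring

variable [DecidableEq V] [DecidableRel G.Adj]

theorem sum_eccMatR_eq_sum_compl_neighborFinset (hecc : ∀ v, 1 < ecc G v) (u : V) :
    ∑ v, eccMatR G u v = ∑ v ∈ Gᶜ.neighborFinset u, eccMatR G u v := by
  refine (sum_subset (subset_univ _) fun v _ hv => ?_).symm
  apply eccMatR_eq_zero_of_dist_le_one (hecc u) (hecc v)
  rw [SimpleGraph.mem_neighborFinset, SimpleGraph.compl_adj, not_and_not_right] at hv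
  by_cases huv : u = v
  · simp [huv]
  · exact (SimpleGraph.dist_eq_one_iff_adj.mpr (hv huv)).le

theorem card_sub_one_mul_totalEcc_sub_eccConnIndex :
    ((Fintype.card V : ℝ) - 1) * totalEcc G - eccConnIndex G =
      ∑ u, ∑ _v ∈ Gᶜ.neighborFinset u, (ecc G u : ℝ) := by
  rw [totalEcc, eccConnIndex, mul_sum, ← sum_sub_distrib]
  refine sum_congr rfl fun u _ => ?_
  have hdeg : G.degree u + 1 ≤ Fintype.card V := G.degree_lt_card_verts u
  rw [sum_const, SimpleGraph.card_neighborFinset_eq_degree, SimpleGraph.degree_compl,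
    nsmul_eq_mul, Nat.sub_sub, Nat.cast_sub (by omega)]
  push_cast
  ring

theorem ecc_le_two_of_forall_eccMatR_eq_ecc (hconn : G.Connected) {u : V}
    (h : ∀ v ∈ Gᶜ.neighborFinset u, eccMatR G u v = ecc G u) : ecc G u ≤ 2 := by
  by_contra! hu
  obtain ⟨x, hx⟩ := exists_dist_eq_of_le_ecc hconn u hu.le
  have hxu : u ≠ x := by
    rintro rfl
    simp at hx
  have hnadj : ¬G.Adj u x := fun hadj => by
    rw [SimpleGraph.dist_eq_one_iff_adj.mpr hadj] at hx
    omega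
  have hentry := h x (by simpa [SimpleGraph.mem_neighborFinset] using ⟨hxu, hnadj⟩)
  unfold eccMatR at hentry
  split_ifs at hentry <;> norm_cast at hentry <;> omega

theorem eccMatR_eq_ecc_of_graphDiam_eq_two (hconn : G.Connected) (hecc : ∀ v, 1 < ecc G v)
    (hdiam : graphDiam G = 2) {u v : V} (hv : v ∈ Gᶜ.neighborFinset u) :
    eccMatR G u v = ecc G u := by
  have hecc_two (w : V) : ecc G w = 2 := le_antisymm (hdiam ▸ ecc_le_graphDiam w) (hecc w)
  rw [SimpleGraph.mem_neighborFinset, SimpleGraph.compl_adj] at hv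
  have hdist : G.dist u v = 2 :=
    le_antisymm (hecc_two u ▸ dist_le_ecc G u v) (hconn.one_lt_dist_of_ne_of_not_adj hv.1 hv.2)
  simp [eccMatR, hdist, hecc_two]

theorem forall_eccMatR_eq_ecc_iff (hconn : G.Connected) (hecc : ∀ v, 1 < ecc G v) :
    (∀ u, ∀ v ∈ Gᶜ.neighborFinset u, eccMatR G u v = ecc G u) ↔ graphDiam G = 2 := by
  refine ⟨fun h => ?_, fun hdiam u v => eccMatR_eq_ecc_of_graphDiam_eq_two hconn hecc hdiam⟩
  obtain ⟨v₀⟩ := hconn.nonempty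
  exact le_antisymm (Finset.sup_le fun u _ => ecc_le_two_of_forall_eccMatR_eq_ecc hconn (h u))
    ((hecc v₀).trans_le (ecc_le_graphDiam v₀))

/-- 2W_ε(G) ≤ (p-1)ε*(G) - ζ(G) when all eccentricities exceed 1,
with equality iff diam(G) = 2. -/
theorem stmt_10 {V : Type*} [Fintype V] (G : SimpleGraph V) [DecidableRel G.Adj]
    (hconn : G.Connected) (hecc : ∀ v : V, 1 < ecc G v) :
    2 * eccWiener G ≤ ((Fintype.card V : ℝ) - 1) * totalEcc G - eccConnIndex G ∧
    (2 * eccWiener G = ((Fintype.card V : ℝ) - 1) * totalEcc G - eccConnIndex G ↔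
      graphDiam G = 2) := by
  classical
  have hle (u : V) : ∀ v ∈ Gᶜ.neighborFinset u, eccMatR G u v ≤ ecc G u :=
    fun v _ => eccMatR_le_ecc u v
  simp only [two_mul_eccWiener, sum_eccMatR_eq_sum_compl_neighborFinset hecc,
    card_sub_one_mul_totalEcc_sub_eccConnIndex]
  refine ⟨sum_le_sum fun u _ => sum_le_sum (hle u), ?_⟩
  rw [sum_eq_sum_iff_of_le fun u _ => sum_le_sum (hle u)]
  simp only [mem_univ, true_implies, sum_eq_sum_iff_of_le (hle _)]
  exact forall_eccMatR_eq_ecc_iff hconn hecc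

end EccPaper
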